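/- arXiv:1904.02680 — 2 statements merged into one kernel-verified Lean document; each statement's English description precedes it below -/
import Mathlib

section
/- Let μ(ρ) = min_{ω∈Ω} D(ρ,ω) be the state resource monotone induced by a distance quantifier D. Then the resource generating power R_g(N) = max over free states ω_AE of μ((N⊗id_E)(ω_AE)) and the resource boosting power R_b(N) = max over all states ρ_AE of ( μ((N⊗id_E)(ρ_AE)) − μ(ρ_AE) ) are channel resource monotones: both are nonnegative on all channels, both vanish on every RNG channel, and both satisfy R(φ₂∘(N⊗id)∘φ₁) ≤ R(N) for all channels N and all free operations φ₁, φ₂ ∈ Φ. -/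
set_option linter.unusedVariables false

noncomputable section

open scoped BigOperators ComplexOrder

/-! ## Basic objects: states and channels -/

/-- Square complex matrices of size `d` (the observables/operators of a `d`-dimensional system). -/
abbrev Mat (d : ℕ) := Matrix (Fin d) (Fin d) ℂ

/-- A quantum state: a positive semidefinite matrix of trace one. -/
def IsState {d : ℕ} (ρ : Mat d) : Prop := ρ.PosSemidef ∧ ρ.trace = 1

/-- Linear maps between matrix algebras. -/
abbrev MMap (a b : ℕ) := Mat a →ₗ[ℂ] Mat b

/-- The identity channel on an `e`-dimensional system. -/
def idMap (e : ℕ) : MMap e e := LinearMap.id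

/-- The `(i,j)` slice of a bipartite matrix, as a linear map. -/
def matSlice {a c : ℕ} (i j : Fin a) :
    Matrix (Fin a × Fin c) (Fin a × Fin c) ℂ →ₗ[ℂ] Mat c where
  toFun X := Matrix.of fun k l => X (i, k) (j, l)
  map_add' _ _ := rfl
  map_smul' _ _ := rfl

/-- Tensor product of matrix maps, on product index types. -/
def tensorAux {a b c d : ℕ} (N : MMap a b) (M : MMap c d) :
    Matrix (Fin a × Fin c) (Fin a × Fin c) ℂ →ₗ[ℂ]
      Matrix (Fin b × Fin d) (Fin b × Fin d) ℂ where
  toFun X := Matrix.of fun q q' =>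
    ∑ p : Fin a × Fin a,
      N (Matrix.single p.1 p.2 1) q.1 q'.1 * M (matSlice p.1 p.2 X) q.2 q'.2
  map_add' X Y := by
    ext q q'
    simp [map_add, Matrix.add_apply, mul_add, Finset.sum_add_distrib]
  map_smul' r X := by
    ext q q'
    simp only [Matrix.of_apply, map_smul, Matrix.smul_apply, smul_eq_mul, RingHom.id_apply,
      Finset.mul_sum]
    exact Finset.sum_congr rfl fun p _ => by ring

/-- Tensor product `N ⊗ M` of matrix maps. -/
def tensorMap {a b c d : ℕ} (N : MMap a b) (M : MMap c d) : MMap (a * c) (b * d) :=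
  (Matrix.reindexLinearEquiv ℂ ℂ finProdFinEquiv finProdFinEquiv).toLinearMap ∘ₗ
    tensorAux N M ∘ₗ
      (Matrix.reindexLinearEquiv ℂ ℂ finProdFinEquiv.symm finProdFinEquiv.symm).toLinearMap

/-- Positive maps: maps preserving positive semidefiniteness. -/
def IsPosMap {a b : ℕ} (N : MMap a b) : Prop :=
  ∀ X : Mat a, X.PosSemidef → (N X).PosSemidef

/-- Completely positive maps: `N ⊗ id_E` is positive for every ancilla dimension. -/
def IsCP {a b : ℕ} (N : MMap a b) : Prop :=
  IsPosMap N ∧ ∀ e : ℕ, IsPosMap (tensorMap N (idMap e))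

/-- Trace-preserving maps. -/
def IsTP {a b : ℕ} (N : MMap a b) : Prop := ∀ X : Mat a, (N X).trace = X.trace

/-- A quantum channel: a completely positive trace-preserving linear map. -/
def IsChannel {a b : ℕ} (N : MMap a b) : Prop := IsCP N ∧ IsTP N

/-- Tensor product of two matrices (Kronecker product, reindexed to `Fin (a*c)`). -/
def tensorState {a c : ℕ} (ρ : Mat a) (σ : Mat c) : Mat (a * c) :=
  Matrix.reindex finProdFinEquiv finProdFinEquiv (Matrix.kroneckerMap (· * ·) ρ σ)

/-- The `n`-fold tensor power of a matrix map. -/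
def chanPow {a b : ℕ} (N : MMap a b) : (n : ℕ) → MMap (a ^ n) (b ^ n)
  | 0 => idMap 1
  | n + 1 => tensorMap (chanPow N n) N

/-- The `n`-fold tensor power of a matrix. -/
def statePow {d : ℕ} (ρ : Mat d) : (n : ℕ) → Mat (d ^ n)
  | 0 => 1
  | n + 1 => tensorState (statePow ρ n) ρ

/-- The trace norm of a matrix, as the sum of its singular values. -/
def traceNorm {d : ℕ} (A : Mat d) : ℝ :=
  ∑ i, Real.sqrt ((Matrix.isHermitian_conjTranspose_mul_self A).eigenvalues i)

/-- The diamond-norm distance between two matrix maps. -/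
def diamondDist {a b : ℕ} (N M : MMap a b) : ℝ :=
  sSup {x : ℝ | ∃ (e : ℕ) (ρ : Mat (a * e)), IsState ρ ∧
    x = traceNorm (tensorMap (N - M) (idMap e) ρ)}

/-! ## State resource theories -/

/-- A distance quantifier: a real number assigned to each pair of equal-dimension matrices. -/
def DQ : Type := ∀ d : ℕ, Mat d → Mat d → ℝ

/-- The defining properties of a distance quantifier: nonnegativity and data processing. -/
structure IsDistanceQuantifier (D : DQ) : Prop where
  nonneg : ∀ (d : ℕ) (ρ σ : Mat d), IsState ρ → IsState σ → 0 ≤ D d ρ σ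
  eq_zero : ∀ (d : ℕ) (ρ σ : Mat d), IsState ρ → IsState σ → ρ = σ → D d ρ σ = 0
  dpi : ∀ (a b : ℕ) (N : MMap a b), IsChannel N → ∀ ρ σ : Mat a,
    IsState ρ → IsState σ → D b (N ρ) (N σ) ≤ D a ρ σ

/-- An assignment of a set of free states to each system. -/
def FreeStates : Type := ∀ d : ℕ, Set (Mat d)

structure IsFreeStates (Ω : FreeStates) : Prop where
  nonempty : ∀ d : ℕ, 0 < d → (Ω d).Nonempty
  isState : ∀ (d : ℕ) (ω : Mat d), ω ∈ Ω d → IsState ω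

/-- Resource-nongenerating channels: `(N ⊗ id_E)(ω)` is free for every free `ω` and ancilla `E`. -/
def RNG (Ω : FreeStates) {a b : ℕ} (N : MMap a b) : Prop :=
  ∀ (e : ℕ) (ω : Mat (a * e)), ω ∈ Ω (a * e) →
    tensorMap N (idMap e) ω ∈ Ω (b * e)

/-- An assignment of a set of free operations between each pair of systems. -/
def FreeOps : Type := ∀ a b : ℕ, Set (MMap a b)

structure IsFreeOps (Ω : FreeStates) (Φ : FreeOps) : Prop where
  channel : ∀ (a b : ℕ) (φ : MMap a b), φ ∈ Φ a b → IsChannel φ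
  maps_free : ∀ (a b : ℕ) (φ : MMap a b), φ ∈ Φ a b → ∀ ω ∈ Ω a, φ ω ∈ Ω b
  tensor_id : ∀ (a b : ℕ) (φ : MMap a b), φ ∈ Φ a b →
    ∀ e : ℕ, tensorMap φ (idMap e) ∈ Φ (a * e) (b * e)

/-- Channel distance induced by a state distance quantifier (maximized over all input
states together with an arbitrary ancilla). -/
def chanDist (D : DQ) {a b : ℕ} (N M : MMap a b) : ℝ :=
  sSup {x : ℝ | ∃ (e : ℕ) (ρ : Mat (a * e)), IsState ρ ∧
    x = D (b * e) (tensorMap N (idMap e) ρ) (tensorMap M (idMap e) ρ)}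

/-- Free-state-restricted channel distance. -/
def chanDistFree (D : DQ) (Ω : FreeStates) {a b : ℕ} (N M : MMap a b) : ℝ :=
  sSup {x : ℝ | ∃ (e : ℕ) (ω : Mat (a * e)), ω ∈ Ω (a * e) ∧
    x = D (b * e) (tensorMap N (idMap e) ω) (tensorMap M (idMap e) ω)}

/-- Distance-based channel resource monotone `R(N) = min_{M ∈ RNG} D(N, M)`. -/
def Rmon (D : DQ) (Ω : FreeStates) {a b : ℕ} (N : MMap a b) : ℝ :=
  sInf {x : ℝ | ∃ M : MMap a b, IsChannel M ∧ RNG Ω M ∧ x = chanDist D N M}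

/-- Free-state-restricted channel resource monotone `R_Ω(N) = min_{M ∈ RNG} D_Ω(N, M)`. -/
def ROmega (D : DQ) (Ω : FreeStates) {a b : ℕ} (N : MMap a b) : ℝ :=
  sInf {x : ℝ | ∃ M : MMap a b, IsChannel M ∧ RNG Ω M ∧ x = chanDistFree D Ω N M}

/-- The state resource monotone induced by a distance quantifier: `μ(ρ) = min_{ω ∈ Ω} D(ρ, ω)`. -/
def muDist (D : DQ) (Ω : FreeStates) (d : ℕ) (ρ : Mat d) : ℝ :=
  sInf {x : ℝ | ∃ ω ∈ Ω d, x = D d ρ ω}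

/-- The resource generating power of a channel, for a state resource measure `μ`. -/
def RgOf (μ : ∀ d : ℕ, Mat d → ℝ) (Ω : FreeStates) {a b : ℕ} (N : MMap a b) : ℝ :=
  sSup {x : ℝ | ∃ (e : ℕ) (ω : Mat (a * e)), ω ∈ Ω (a * e) ∧
    x = μ (b * e) (tensorMap N (idMap e) ω)}

/-- The resource boosting power of a channel, for a state resource measure `μ`. -/
def RbOf (μ : ∀ d : ℕ, Mat d → ℝ) {a b : ℕ} (N : MMap a b) : ℝ :=
  sSup {x : ℝ | ∃ (e : ℕ) (ρ : Mat (a * e)), IsState ρ ∧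
    x = μ (b * e) (tensorMap N (idMap e) ρ) - μ (a * e) ρ}

/-! ## Super-operations and asymptotic rates -/

/-- `N'` is obtained from `N` by a free super-operation `N' = φ₁ ∘ (N ⊗ id) ∘ φ₂`. -/
def IsFreeTransform (Φ : FreeOps) {a b c c' : ℕ} (N : MMap a b) (N' : MMap c c') : Prop :=
  ∃ (e : ℕ) (φ₁ : MMap (b * e) c') (φ₂ : MMap c (a * e)),
    φ₁ ∈ Φ (b * e) c' ∧ φ₂ ∈ Φ c (a * e) ∧
    N' = φ₁ ∘ₗ tensorMap N (idMap e) ∘ₗ φ₂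

/-- `IterComp Φ N M n` : `M` is a sequential composition `Λ₁(N) ∘ ⋯ ∘ Λₙ(N)` of `n`
outputs of free super-operations applied to `N`. -/
inductive IterComp (Φ : FreeOps) {a b : ℕ} (N : MMap a b) :
    ∀ {c c' : ℕ}, MMap c c' → ℕ → Prop
  | single {c c' : ℕ} (N' : MMap c c') : IsFreeTransform Φ N N' → IterComp Φ N N' 1
  | comp {c c' c'' : ℕ} (M : MMap c c') (N' : MMap c' c'') (n : ℕ) :
      IterComp Φ N M n → IsFreeTransform Φ N N' → IterComp Φ N (N' ∘ₗ M) (n + 1)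

/-- A rate `R` is achievable for parallel distillation of `N` into channels from `𝔊`. -/
def DistillAchievable (Φ : FreeOps) {g g' : ℕ} (𝔊 : Set (MMap g g')) {a b : ℕ}
    (N : MMap a b) (R : ℝ) : Prop :=
  ∀ ε : ℝ, 0 < ε → ∃ n₀ : ℕ, ∀ n : ℕ, n₀ ≤ n →
    ∃ G ∈ 𝔊, ∃ N' : MMap (g ^ Nat.floor ((n : ℝ) * R)) (g' ^ Nat.floor ((n : ℝ) * R)),
      IsFreeTransform Φ (chanPow N n) N' ∧
      diamondDist N' (chanPow G (Nat.floor ((n : ℝ) * R))) ≤ ε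

/-- The parallel channel distillation rate. -/
def Rdistill (Φ : FreeOps) {g g' : ℕ} (𝔊 : Set (MMap g g')) {a b : ℕ} (N : MMap a b) : ℝ :=
  sSup {R : ℝ | 0 ≤ R ∧ DistillAchievable Φ 𝔊 N R}

/-- A rate `R` is achievable for parallel dilution of channels from `𝔊` into `N`. -/
def DiluteAchievable (Φ : FreeOps) {g g' : ℕ} (𝔊 : Set (MMap g g')) {a b : ℕ}
    (N : MMap a b) (R : ℝ) : Prop :=
  ∀ ε : ℝ, 0 < ε → ∃ n₀ : ℕ, ∀ n : ℕ, n₀ ≤ n →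
    ∃ G ∈ 𝔊, ∃ N' : MMap (a ^ n) (b ^ n),
      IsFreeTransform Φ (chanPow G (Nat.ceil ((n : ℝ) * R))) N' ∧
      diamondDist N' (chanPow N n) ≤ ε

/-- The parallel channel dilution rate. -/
def Rdilute (Φ : FreeOps) {g g' : ℕ} (𝔊 : Set (MMap g g')) {a b : ℕ} (N : MMap a b) : ℝ :=
  sInf {R : ℝ | 0 ≤ R ∧ DiluteAchievable Φ 𝔊 N R}

/-- A rate `R` is achievable for iterative distillation of `N`. -/
def IterDistillAchievable (Φ : FreeOps) {g g' : ℕ} (𝔊 : Set (MMap g g')) {a b : ℕ}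
    (N : MMap a b) (R : ℝ) : Prop :=
  ∀ ε : ℝ, 0 < ε → ∃ n₀ : ℕ, ∀ n : ℕ, n₀ ≤ n →
    ∃ G ∈ 𝔊, ∃ N' : MMap (g ^ Nat.floor ((n : ℝ) * R)) (g' ^ Nat.floor ((n : ℝ) * R)),
      IterComp Φ N N' n ∧
      diamondDist N' (chanPow G (Nat.floor ((n : ℝ) * R))) ≤ ε

/-- The iterative channel distillation rate. -/
def RdistillIter (Φ : FreeOps) {g g' : ℕ} (𝔊 : Set (MMap g g')) {a b : ℕ} (N : MMap a b) : ℝ :=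
  sSup {R : ℝ | 0 ≤ R ∧ IterDistillAchievable Φ 𝔊 N R}

/-- A rate `R` is achievable for iterative dilution of channels from `𝔊` into `N`. -/
def IterDiluteAchievable (Φ : FreeOps) {g g' : ℕ} (𝔊 : Set (MMap g g')) {a b : ℕ}
    (N : MMap a b) (R : ℝ) : Prop :=
  ∀ ε : ℝ, 0 < ε → ∃ n₀ : ℕ, ∀ n : ℕ, n₀ ≤ n →
    ∃ G ∈ 𝔊, ∃ N' : MMap (a ^ n) (b ^ n),
      IterComp Φ G N' (Nat.ceil ((n : ℝ) * R)) ∧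
      diamondDist N' (chanPow N n) ≤ ε

/-- The iterative channel dilution rate. -/
def RdiluteIter (Φ : FreeOps) {g g' : ℕ} (𝔊 : Set (MMap g g')) {a b : ℕ} (N : MMap a b) : ℝ :=
  sInf {R : ℝ | 0 ≤ R ∧ IterDiluteAchievable Φ 𝔊 N R}

/-- The constant channel that outputs the state `ρm` on every input. -/
def constChan (a : ℕ) {g : ℕ} (ρm : Mat g) : MMap a g where
  toFun X := X.trace • ρm
  map_add' X Y := by simp [Matrix.trace_add, add_smul]
  map_smul' r X := by simp [Matrix.trace_smul, smul_smul]

/-- The asymptotic state distillation rate (towards the maximal resource state `ρm`). -/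
def muDistill (Φ : FreeOps) {g : ℕ} (ρm : Mat g) (d : ℕ) (σ : Mat d) : ℝ :=
  sSup {R : ℝ | 0 ≤ R ∧ ∀ ε : ℝ, 0 < ε → ∃ n₀ : ℕ, ∀ n : ℕ, n₀ ≤ n →
    ∃ φ ∈ Φ (d ^ n) (g ^ Nat.floor ((n : ℝ) * R)),
      traceNorm (φ (statePow σ n) - statePow ρm (Nat.floor ((n : ℝ) * R))) ≤ ε}

/-- The asymptotic state dilution rate (from the maximal resource state `ρm`). -/
def muDilute (Φ : FreeOps) {g : ℕ} (ρm : Mat g) (d : ℕ) (σ : Mat d) : ℝ :=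
  sInf {R : ℝ | 0 ≤ R ∧ ∀ ε : ℝ, 0 < ε → ∃ n₀ : ℕ, ∀ n : ℕ, n₀ ≤ n →
    ∃ φ ∈ Φ (g ^ Nat.ceil ((n : ℝ) * R)) (d ^ n),
      traceNorm (φ (statePow ρm (Nat.ceil ((n : ℝ) * R))) - statePow σ n) ≤ ε}

/-! ## Coherence -/

/-- Incoherent (diagonal) matrices with respect to the computational basis. -/
def IsIncoherent {d : ℕ} (ρ : Mat d) : Prop := ∀ i j : Fin d, i ≠ j → ρ i j = 0

/-- Matrix logarithm via the continuous functional calculus. -/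
def matLog {d : ℕ} (A : Mat d) : Mat d := cfc Real.log A

/-- The quantum relative entropy `S(ρ‖σ) = Tr ρ (log ρ − log σ)`. -/
def relEnt {d : ℕ} (ρ σ : Mat d) : ℝ := ((ρ * (matLog ρ - matLog σ)).trace).re

/-- The relative entropy of coherence `C_r(ρ) = min_{δ incoherent} S(ρ‖δ)`. -/
def Cr {d : ℕ} (ρ : Mat d) : ℝ :=
  sInf {x : ℝ | ∃ δ : Mat d, IsState δ ∧ IsIncoherent δ ∧ x = relEnt ρ δ}

/-- Maximally incoherent operations: channels mapping incoherent states to incoherent states. -/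
def MIO : FreeOps := fun a b =>
  {M | IsChannel M ∧ ∀ δ : Mat a, IsState δ → IsIncoherent δ → IsIncoherent (M δ)}

/-- The coherence generating power of a channel. -/
def Crg {a b : ℕ} (N : MMap a b) : ℝ :=
  sSup {x : ℝ | ∃ (e : ℕ) (δ : Mat (a * e)), IsState δ ∧ IsIncoherent δ ∧
    x = Cr (tensorMap N (idMap e) δ)}

/-- The coherence boosting power of a channel. -/
def Crb {a b : ℕ} (N : MMap a b) : ℝ :=
  sSup {x : ℝ | ∃ (e : ℕ) (ρ : Mat (a * e)), IsState ρ ∧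
    x = Cr (tensorMap N (idMap e) ρ) - Cr ρ}

/-- `C_{r,I}(N)`: the free-state-restricted relative-entropy distance from `N` to MIO. -/
def CrI {a b : ℕ} (N : MMap a b) : ℝ :=
  sInf {x : ℝ | ∃ M : MMap a b, M ∈ MIO a b ∧
    x = sSup {y : ℝ | ∃ (e : ℕ) (δ : Mat (a * e)), IsState δ ∧ IsIncoherent δ ∧
      y = relEnt (tensorMap N (idMap e) δ) (tensorMap M (idMap e) δ)}}

/-- The maximally coherent qubit state `Ψ₂`. -/
def Psi2 : Mat 2 := Matrix.of fun _ _ => (1 / 2 : ℂ)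

/-- The optimal unit resource channel for coherence: the constant channel with output `Ψ₂`. -/
def Gstar : MMap 2 2 := constChan 2 Psi2

/-- The smooth max entropy of channel coherence. -/
def CmaxEps (ε : ℝ) {a b : ℕ} (N : MMap a b) : ℝ :=
  sInf {x : ℝ | ∃ N' : MMap a b, IsChannel N' ∧ diamondDist N N' ≤ ε ∧
    x = Real.log (sInf {l : ℝ | ∃ M ∈ MIO a b, IsCP ((l : ℂ) • M - N')})}

/-!
Pre- and post-processing by free operations can only lower `μ`, by data processing and because
free operations preserve free states. After regrouping the ancillas, `(N ⊗ id_E) ⊗ id_F` is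
`N ⊗ id_{EF}`, so each value in the supremum for `φ₂ ∘ (N ⊗ id_E) ∘ φ₁` is dominated by one in the
supremum for `N`. RNG channels keep free states free, and `μ` vanishes on free states.
The suprema are finite: every pair of states is the image of `(|0⟩⟨0|, |1⟩⟨1|)` under a
measure-and-prepare channel, so `D(ρ, σ) ≤ D(|0⟩⟨0|, |1⟩⟨1|)`.
-/

section TensorIdentity

open Matrix

variable {a b c : ℕ}

lemma tensorMap_idMap_apply (N : MMap a b) (e : ℕ) (X : Mat (a * e)) (i j : Fin (b * e)) :
    tensorMap N (idMap e) X i j =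
      ∑ p : Fin a × Fin a,
        N (single p.1 p.2 1) (finProdFinEquiv.symm i).1 (finProdFinEquiv.symm j).1 *
          X (finProdFinEquiv (p.1, (finProdFinEquiv.symm i).2))
            (finProdFinEquiv (p.2, (finProdFinEquiv.symm j).2)) := rfl

lemma linearMap_apply_eq_sum_single (A : MMap a b) (M : Mat a) (u v : Fin b) :
    A M u v = ∑ w : Fin a × Fin a, M w.1 w.2 * A (single w.1 w.2 1) u v := by
  conv_lhs => rw [matrix_eq_sum_single M]
  simp only [map_sum, Matrix.sum_apply, Fintype.sum_prod_type]
  refine Finset.sum_congr rfl fun i _ => Finset.sum_congr rfl fun j _ => ?_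
  rw [show single i j (M i j) = M i j • single i j (1 : ℂ) by rw [smul_single, smul_eq_mul,
    mul_one], map_smul, Matrix.smul_apply, smul_eq_mul]

lemma tensorMap_idMap_comp (A : MMap b c) (B : MMap a b) (f : ℕ) :
    tensorMap (A ∘ₗ B) (idMap f) = tensorMap A (idMap f) ∘ₗ tensorMap B (idMap f) := by
  ext X i j : 3
  obtain ⟨⟨u, r⟩, rfl⟩ := finProdFinEquiv.surjective i
  obtain ⟨⟨v, s⟩, rfl⟩ := finProdFinEquiv.surjective j
  simp only [LinearMap.comp_apply, tensorMap_idMap_apply, Equiv.symm_apply_apply,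
    linearMap_apply_eq_sum_single A (B _), Finset.sum_mul, Finset.mul_sum]
  rw [Finset.sum_comm]
  exact Finset.sum_congr rfl fun w _ => Finset.sum_congr rfl fun p _ => by ring

def matCast {d d' : ℕ} (h : d = d') (ρ : Mat d) : Mat d' :=
  reindex (finCongr h) (finCongr h) ρ

lemma finCongr_mul_assoc_finProdFinEquiv {m n p : ℕ} (x : Fin m) (y : Fin n) (z : Fin p) :
    finCongr (mul_assoc m n p) (finProdFinEquiv (finProdFinEquiv (x, y), z)) =
      finProdFinEquiv (x, finProdFinEquiv (y, z)) := by
  ext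
  simp only [finCongr_apply, Fin.val_cast, finProdFinEquiv_apply_val]
  ring

lemma tensorMap_tensorMap_idMap (N : MMap a b) (e f : ℕ) (X : Mat (a * e * f)) :
    tensorMap (tensorMap N (idMap e)) (idMap f) X =
      matCast (mul_assoc b e f).symm
        (tensorMap N (idMap (e * f)) (matCast (mul_assoc a e f) X)) := by
  have hsymm : ∀ {m n p : ℕ} (x : Fin m) (y : Fin n) (z : Fin p),
      finCongr (mul_assoc m n p).symm (finProdFinEquiv (x, finProdFinEquiv (y, z))) =
        finProdFinEquiv (finProdFinEquiv (x, y), z) := fun x y z =>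
    (finCongr (mul_assoc _ _ _)).symm_apply_eq.2 (finCongr_mul_assoc_finProdFinEquiv x y z).symm
  ext i j
  obtain ⟨⟨u, r⟩, rfl⟩ := finProdFinEquiv.surjective i
  obtain ⟨⟨q1, q2⟩, rfl⟩ := finProdFinEquiv.surjective u
  obtain ⟨⟨v, s⟩, rfl⟩ := finProdFinEquiv.surjective j
  obtain ⟨⟨q1', q2'⟩, rfl⟩ := finProdFinEquiv.surjective v
  simp only [matCast, reindex_apply, submatrix_apply, finCongr_symm,
    finCongr_mul_assoc_finProdFinEquiv, tensorMap_idMap_apply, Equiv.symm_apply_apply, hsymm,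
    Finset.sum_mul]
  rw [Finset.sum_comm]
  refine Finset.sum_congr rfl fun w _ => ?_
  simp [single, Fintype.sum_prod_type, ite_and, Finset.sum_ite_eq', mul_comm]

lemma trace_eq_sum_finProdFinEquiv {m n : ℕ} (M : Mat (m * n)) :
    M.trace = ∑ y : Fin m × Fin n, M (finProdFinEquiv y) (finProdFinEquiv y) :=
  (Equiv.sum_comp finProdFinEquiv M.diag).symm

lemma IsTP.tensorMap_idMap {N : MMap a b} (hN : IsTP N) (e : ℕ) :
    IsTP (tensorMap N (idMap e)) := by
  intro X
  have hblock : ∀ p : Fin a × Fin a,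
      ∑ y : Fin b × Fin e, N (single p.1 p.2 1) y.1 y.1 *
        X (finProdFinEquiv (p.1, y.2)) (finProdFinEquiv (p.2, y.2)) =
      (single p.1 p.2 (1 : ℂ)).trace *
        ∑ k : Fin e, X (finProdFinEquiv (p.1, k)) (finProdFinEquiv (p.2, k)) := by
    intro p
    rw [← hN]
    simp only [Fintype.sum_prod_type, Matrix.trace, Matrix.diag, Finset.sum_mul, Finset.mul_sum]
    exact Finset.sum_comm
  rw [trace_eq_sum_finProdFinEquiv, trace_eq_sum_finProdFinEquiv]
  simp only [tensorMap_idMap_apply, Equiv.symm_apply_apply]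
  rw [Finset.sum_comm, Finset.sum_congr rfl fun p _ => hblock p]
  simp [trace, single, Fintype.sum_prod_type, ite_and, Finset.sum_ite_eq']

lemma IsChannel.tensorMap_idMap {N : MMap a b} (hN : IsChannel N) (e : ℕ) :
    IsChannel (tensorMap N (idMap e)) := by
  refine ⟨⟨hN.1.2 e, fun f X hX => ?_⟩, hN.2.tensorMap_idMap e⟩
  rw [tensorMap_tensorMap_idMap]
  exact (hN.1.2 (e * f) _ (hX.submatrix _)).submatrix _

end TensorIdentity

lemma IsChannel.isState_apply {a b : ℕ} {N : MMap a b} (hN : IsChannel N) {ρ : Mat a}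
    (hρ : IsState ρ) : IsState (N ρ) :=
  ⟨hN.1.1 ρ hρ.1, (hN.2 ρ).trans hρ.2⟩

lemma IsState.dim_pos {d : ℕ} {ρ : Mat d} (hρ : IsState ρ) : 0 < d := by
  rcases Nat.eq_zero_or_pos d with rfl | h
  · simpa [Matrix.trace] using hρ.2
  · exact h

lemma isState_matCast_iff {d d' : ℕ} (h : d = d') {ρ : Mat d} :
    IsState (matCast h ρ) ↔ IsState ρ := by
  subst h; rfl

lemma matCast_mem_iff (Ω : FreeStates) {d d' : ℕ} (h : d = d') {ρ : Mat d} :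
    matCast h ρ ∈ Ω d' ↔ ρ ∈ Ω d := by
  subst h; rfl

lemma apply_matCast (μ : ∀ d : ℕ, Mat d → ℝ) {d d' : ℕ} (h : d = d') (ρ : Mat d) :
    μ d' (matCast h ρ) = μ d ρ := by
  subst h; rfl

section MeasurePrepare

open Matrix Kronecker

variable {d : ℕ}

def basisProj (i : Fin d) : Mat d := diagonal (Pi.single i 1)

lemma isState_basisProj (i : Fin d) : IsState (basisProj i) :=
  ⟨PosSemidef.diagonal (Pi.single_nonneg.2 zero_le_one), by simp [basisProj, trace_diagonal]⟩

def measurePrepare (τ σ : Mat d) : MMap 2 d where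
  toFun X := X 0 0 • τ + X 1 1 • σ
  map_add' X Y := by
    simp only [Matrix.add_apply, add_smul]
    abel
  map_smul' c X := by simp [smul_smul, smul_add]

lemma measurePrepare_basisProj_zero (τ σ : Mat d) : measurePrepare τ σ (basisProj 0) = τ := by
  simp [measurePrepare, basisProj]

lemma measurePrepare_basisProj_one (τ σ : Mat d) : measurePrepare τ σ (basisProj 1) = σ := by
  simp [measurePrepare, basisProj]

lemma tensorMap_measurePrepare_idMap (τ σ : Mat d) (e : ℕ) (X : Mat (2 * e)) :
    tensorMap (measurePrepare τ σ) (idMap e) X =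
      reindex finProdFinEquiv finProdFinEquiv
        (τ ⊗ₖ X.submatrix (fun k => finProdFinEquiv (0, k)) (fun k => finProdFinEquiv (0, k)) +
          σ ⊗ₖ X.submatrix (fun k => finProdFinEquiv (1, k)) (fun k => finProdFinEquiv (1, k))) := by
  ext i j
  obtain ⟨⟨u, r⟩, rfl⟩ := finProdFinEquiv.surjective i
  obtain ⟨⟨v, s⟩, rfl⟩ := finProdFinEquiv.surjective j
  simp [tensorMap_idMap_apply, measurePrepare, single, Fintype.sum_prod_type, Fin.sum_univ_two]

lemma isChannel_measurePrepare {τ σ : Mat d} (hτ : IsState τ) (hσ : IsState σ) :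
    IsChannel (measurePrepare τ σ) := by
  refine ⟨⟨fun X hX => ?_, fun e X hX => ?_⟩, fun X => ?_⟩
  · exact (hτ.1.smul hX.diag_nonneg).add (hσ.1.smul hX.diag_nonneg)
  · rw [tensorMap_measurePrepare_idMap]
    exact ((hτ.1.kronecker (hX.submatrix _)).add (hσ.1.kronecker (hX.submatrix _))).submatrix _
  · change (X 0 0 • τ + X 1 1 • σ).trace = X.trace
    rw [trace_add, trace_smul, trace_smul, hτ.2, hσ.2]
    simp [trace, Fin.sum_univ_two]

end MeasurePrepare

lemma IsDistanceQuantifier.le_dist_basisProj {D : DQ} (hD : IsDistanceQuantifier D) {d : ℕ}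
    {τ σ : Mat d} (hτ : IsState τ) (hσ : IsState σ) :
    D d τ σ ≤ D 2 (basisProj 0) (basisProj 1) := by
  simpa only [measurePrepare_basisProj_zero, measurePrepare_basisProj_one] using
    hD.dpi 2 d _ (isChannel_measurePrepare hτ hσ) _ _ (isState_basisProj 0) (isState_basisProj 1)

/-- `bddAbove` is needed because `sSup` of an unbounded set of reals is `0`. -/
structure IsBoundedStateMonotone (Ω : FreeStates) (μ : ∀ d : ℕ, Mat d → ℝ) : Prop where
  nonneg : ∀ (d : ℕ) (ρ : Mat d), IsState ρ → 0 ≤ μ d ρ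
  eq_zero : ∀ (d : ℕ) (ω : Mat d), ω ∈ Ω d → μ d ω = 0
  map_le : ∀ (a b : ℕ) (Λ : MMap a b), IsChannel Λ → (∀ ω ∈ Ω a, Λ ω ∈ Ω b) →
    ∀ ρ : Mat a, IsState ρ → μ b (Λ ρ) ≤ μ a ρ
  bddAbove : ∃ C : ℝ, ∀ (d : ℕ) (ρ : Mat d), IsState ρ → μ d ρ ≤ C

section muDist

variable {D : DQ} {Ω : FreeStates} (hD : IsDistanceQuantifier D) (hΩ : IsFreeStates Ω)
include hD hΩ

lemma muDist_nonneg {d : ℕ} {ρ : Mat d} (hρ : IsState ρ) : 0 ≤ muDist D Ω d ρ :=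
  Real.sInf_nonneg fun _ ⟨ω, hω, hx⟩ => hx ▸ hD.nonneg d ρ ω hρ (hΩ.isState d ω hω)

lemma muDist_le {d : ℕ} {ρ ω : Mat d} (hρ : IsState ρ) (hω : ω ∈ Ω d) :
    muDist D Ω d ρ ≤ D d ρ ω :=
  csInf_le ⟨0, fun _ ⟨ω', hω', hx⟩ => hx ▸ hD.nonneg d ρ ω' hρ (hΩ.isState d ω' hω')⟩
    ⟨ω, hω, rfl⟩

lemma isBoundedStateMonotone_muDist : IsBoundedStateMonotone Ω (muDist D Ω) where
  nonneg _ _ := muDist_nonneg hD hΩ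
  eq_zero d ω hω := by
    have hst := hΩ.isState d ω hω
    exact le_antisymm ((muDist_le hD hΩ hst hω).trans_eq (hD.eq_zero d ω ω hst hst rfl))
      (muDist_nonneg hD hΩ hst)
  map_le a b Λ hΛ hfree ρ hρ := by
    obtain ⟨ω₀, hω₀⟩ := hΩ.nonempty a hρ.dim_pos
    refine le_csInf ⟨_, ω₀, hω₀, rfl⟩ ?_
    rintro _ ⟨ω, hω, rfl⟩
    exact (muDist_le hD hΩ (hΛ.isState_apply hρ) (hfree ω hω)).trans
      (hD.dpi a b Λ hΛ ρ ω hρ (hΩ.isState a ω hω))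
  bddAbove := ⟨D 2 (basisProj 0) (basisProj 1), fun d ρ hρ => by
    obtain ⟨ω₀, hω₀⟩ := hΩ.nonempty d hρ.dim_pos
    exact (muDist_le hD hΩ hρ hω₀).trans (hD.le_dist_basisProj hρ (hΩ.isState d ω₀ hω₀))⟩

end muDist

lemma tensorMap_idMap_superop_apply {a b c c' e : ℕ} (N : MMap a b) (φ₂ : MMap (b * e) c')
    (φ₁ : MMap c (a * e)) (f : ℕ) (ρ : Mat (c * f)) :
    tensorMap (φ₂ ∘ₗ tensorMap N (idMap e) ∘ₗ φ₁) (idMap f) ρ =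
      tensorMap φ₂ (idMap f) (matCast (mul_assoc b e f).symm
        (tensorMap N (idMap (e * f)) (matCast (mul_assoc a e f) (tensorMap φ₁ (idMap f) ρ)))) := by
  rw [tensorMap_idMap_comp, tensorMap_idMap_comp, LinearMap.comp_apply, LinearMap.comp_apply,
    tensorMap_tensorMap_idMap]

namespace IsBoundedStateMonotone

variable {Ω : FreeStates} {μ : ∀ d : ℕ, Mat d → ℝ} {a b : ℕ} {N : MMap a b}

lemma le_RgOf (hμ : IsBoundedStateMonotone Ω μ) (hΩ : IsFreeStates Ω) (hN : IsChannel N)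
    {e : ℕ} {ω : Mat (a * e)} (hω : ω ∈ Ω (a * e)) :
    μ (b * e) (tensorMap N (idMap e) ω) ≤ RgOf μ Ω N := by
  obtain ⟨C, hC⟩ := hμ.bddAbove
  refine le_csSup ⟨C, ?_⟩ ⟨e, ω, hω, rfl⟩
  rintro _ ⟨e', ω', hω', rfl⟩
  exact hC _ _ ((hN.tensorMap_idMap e').isState_apply (hΩ.isState _ _ hω'))

lemma le_RbOf (hμ : IsBoundedStateMonotone Ω μ) (hN : IsChannel N) {e : ℕ} {ρ : Mat (a * e)}
    (hρ : IsState ρ) : μ (b * e) (tensorMap N (idMap e) ρ) - μ (a * e) ρ ≤ RbOf μ N := by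
  obtain ⟨C, hC⟩ := hμ.bddAbove
  refine le_csSup ⟨C, ?_⟩ ⟨e, ρ, hρ, rfl⟩
  rintro _ ⟨e', ρ', hρ', rfl⟩
  linarith [hC _ _ ((hN.tensorMap_idMap e').isState_apply hρ'), hμ.nonneg _ _ hρ']

lemma RgOf_nonneg (hμ : IsBoundedStateMonotone Ω μ) (hΩ : IsFreeStates Ω) (hN : IsChannel N) :
    0 ≤ RgOf μ Ω N :=
  Real.sSup_nonneg fun _ ⟨e, _, hω, hx⟩ =>
    hx ▸ hμ.nonneg _ _ ((hN.tensorMap_idMap e).isState_apply (hΩ.isState _ _ hω))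

lemma RbOf_nonneg (hμ : IsBoundedStateMonotone Ω μ) (hΩ : IsFreeStates Ω) (hN : IsChannel N) :
    0 ≤ RbOf μ N := by
  rcases Nat.eq_zero_or_pos a with rfl | ha
  · exact Real.sSup_nonneg fun _ ⟨e, ρ, hρ, _⟩ => absurd hρ.dim_pos (by simp)
  · obtain ⟨ω, hω⟩ := hΩ.nonempty (a * 1) (by simpa using ha)
    have hω' := hΩ.isState _ _ hω
    refine le_trans ?_ (hμ.le_RbOf hN hω')
    rw [hμ.eq_zero _ _ hω, sub_zero]
    exact hμ.nonneg _ _ ((hN.tensorMap_idMap 1).isState_apply hω')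

lemma RgOf_eq_zero_of_RNG (hμ : IsBoundedStateMonotone Ω μ) (hΩ : IsFreeStates Ω)
    (hN : IsChannel N) (hRNG : RNG Ω N) : RgOf μ Ω N = 0 :=
  le_antisymm
    (Real.sSup_le (fun _ ⟨e, ω, hω, hx⟩ => (hx.trans (hμ.eq_zero _ _ (hRNG e ω hω))).le) le_rfl)
    (hμ.RgOf_nonneg hΩ hN)

lemma RbOf_eq_zero_of_RNG (hμ : IsBoundedStateMonotone Ω μ) (hΩ : IsFreeStates Ω)
    (hN : IsChannel N) (hRNG : RNG Ω N) : RbOf μ N = 0 := by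
  refine le_antisymm (Real.sSup_le ?_ le_rfl) (hμ.RbOf_nonneg hΩ hN)
  rintro _ ⟨e, ρ, hρ, rfl⟩
  exact sub_nonpos.2 (hμ.map_le _ _ _ (hN.tensorMap_idMap e) (hRNG e) ρ hρ)

lemma map_le_of_mem_freeOps (hμ : IsBoundedStateMonotone Ω μ) {Φ : FreeOps}
    (hΦ : IsFreeOps Ω Φ) {φ : MMap a b} (hφ : φ ∈ Φ a b) (f : ℕ) {ρ : Mat (a * f)}
    (hρ : IsState ρ) : μ (b * f) (tensorMap φ (idMap f) ρ) ≤ μ (a * f) ρ :=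
  have hφf := hΦ.tensor_id a b φ hφ f
  hμ.map_le _ _ _ (hΦ.channel _ _ _ hφf) (hΦ.maps_free _ _ _ hφf) ρ hρ

lemma RgOf_le_of_isFreeTransform (hμ : IsBoundedStateMonotone Ω μ) (hΩ : IsFreeStates Ω)
    {Φ : FreeOps} (hΦ : IsFreeOps Ω Φ) (hN : IsChannel N) {c c' : ℕ} {N' : MMap c c'}
    (hN' : IsFreeTransform Φ N N') : RgOf μ Ω N' ≤ RgOf μ Ω N := by
  obtain ⟨e, φ₂, φ₁, h₂, h₁, rfl⟩ := hN'
  refine Real.sSup_le ?_ (hμ.RgOf_nonneg hΩ hN)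
  rintro _ ⟨f, ω, hω, rfl⟩
  set ω₁ := matCast (mul_assoc a e f) (tensorMap φ₁ (idMap f) ω)
  have hω₁ : ω₁ ∈ Ω (a * (e * f)) :=
    (matCast_mem_iff Ω _).2 (hΦ.maps_free _ _ _ (hΦ.tensor_id _ _ _ h₁ f) ω hω)
  have hNω₁ := (hN.tensorMap_idMap (e * f)).isState_apply (hΩ.isState _ _ hω₁)
  rw [tensorMap_idMap_superop_apply]
  calc _ ≤ μ (b * e * f) (matCast _ (tensorMap N (idMap (e * f)) ω₁)) :=
        hμ.map_le_of_mem_freeOps hΦ h₂ f ((isState_matCast_iff _).2 hNω₁)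
    _ = μ (b * (e * f)) (tensorMap N (idMap (e * f)) ω₁) := apply_matCast μ _ _
    _ ≤ RgOf μ Ω N := hμ.le_RgOf hΩ hN hω₁

lemma RbOf_le_of_isFreeTransform (hμ : IsBoundedStateMonotone Ω μ) (hΩ : IsFreeStates Ω)
    {Φ : FreeOps} (hΦ : IsFreeOps Ω Φ) (hN : IsChannel N) {c c' : ℕ} {N' : MMap c c'}
    (hN' : IsFreeTransform Φ N N') : RbOf μ N' ≤ RbOf μ N := by
  obtain ⟨e, φ₂, φ₁, h₂, h₁, rfl⟩ := hN'
  refine Real.sSup_le ?_ (hμ.RbOf_nonneg hΩ hN)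
  rintro _ ⟨f, ρ, hρ, rfl⟩
  set ρ₁ := matCast (mul_assoc a e f) (tensorMap φ₁ (idMap f) ρ)
  have hρ₁ : IsState ρ₁ :=
    (isState_matCast_iff _).2 ((hΦ.channel _ _ _ (hΦ.tensor_id _ _ _ h₁ f)).isState_apply hρ)
  have hNρ₁ := (hN.tensorMap_idMap (e * f)).isState_apply hρ₁
  have hpre : μ (a * (e * f)) ρ₁ ≤ μ (c * f) ρ :=
    (apply_matCast μ _ _).trans_le (hμ.map_le_of_mem_freeOps hΦ h₁ f hρ)
  have hpost : μ (c' * f) (tensorMap φ₂ (idMap f) (matCast (mul_assoc b e f).symm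
      (tensorMap N (idMap (e * f)) ρ₁))) ≤ μ (b * (e * f)) (tensorMap N (idMap (e * f)) ρ₁) :=
    (hμ.map_le_of_mem_freeOps hΦ h₂ f ((isState_matCast_iff _).2 hNρ₁)).trans_eq
      (apply_matCast μ _ _)
  rw [tensorMap_idMap_superop_apply]
  linarith [hμ.le_RbOf hN hρ₁]

end IsBoundedStateMonotone

/-- For the state resource monotone `μ(ρ) = min_{ω ∈ Ω} D(ρ, ω)`, the
resource generating power `R_g` and the resource boosting power `R_b` are channel resource
monotones: nonnegative, vanishing on RNG channels, and monotone under free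
super-operations `φ₂ ∘ (· ⊗ id) ∘ φ₁` with `φ₁, φ₂ ∈ Φ`. -/
theorem Rg_Rb_are_channel_resource_monotones
    (D : DQ) (hD : IsDistanceQuantifier D) (Ω : FreeStates) (hΩ : IsFreeStates Ω)
    (Φ : FreeOps) (hΦ : IsFreeOps Ω Φ) :
    (∀ (a b : ℕ) (N : MMap a b), IsChannel N →
      0 ≤ RgOf (muDist D Ω) Ω N ∧ 0 ≤ RbOf (muDist D Ω) N) ∧
    (∀ (a b : ℕ) (M : MMap a b), IsChannel M → RNG Ω M →
      RgOf (muDist D Ω) Ω M = 0 ∧ RbOf (muDist D Ω) M = 0) ∧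
    (∀ (a b e c c' : ℕ) (N : MMap a b) (φ₂ : MMap (b * e) c') (φ₁ : MMap c (a * e)),
      IsChannel N → φ₂ ∈ Φ (b * e) c' → φ₁ ∈ Φ c (a * e) →
      RgOf (muDist D Ω) Ω (φ₂ ∘ₗ tensorMap N (idMap e) ∘ₗ φ₁) ≤ RgOf (muDist D Ω) Ω N ∧
      RbOf (muDist D Ω) (φ₂ ∘ₗ tensorMap N (idMap e) ∘ₗ φ₁) ≤ RbOf (muDist D Ω) N) := by
  have hμ := isBoundedStateMonotone_muDist hD hΩ
  refine ⟨fun a b N hN => ⟨hμ.RgOf_nonneg hΩ hN, hμ.RbOf_nonneg hΩ hN⟩,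
    fun a b M hM hRNG => ⟨hμ.RgOf_eq_zero_of_RNG hΩ hM hRNG, hμ.RbOf_eq_zero_of_RNG hΩ hM hRNG⟩,
    fun a b e c c' N φ₂ φ₁ hN h₂ h₁ => ?_⟩
  have hfree : IsFreeTransform Φ N (φ₂ ∘ₗ tensorMap N (idMap e) ∘ₗ φ₁) :=
    ⟨e, φ₂, φ₁, h₂, h₁, rfl⟩
  exact ⟨hμ.RgOf_le_of_isFreeTransform hΩ hΦ hN hfree,
    hμ.RbOf_le_of_isFreeTransform hΩ hΦ hN hfree⟩

end
end

section
/- Let λ be a resource destroying channel on system A, i.e., a quantum channel such that (λ⊗id_E)(ρ) is a free state for every state ρ of AE and every ancilla E. Then for every quantum channel N on system A, R_Ω(N) ≤ max over free states ω_AE of D( (N⊗id_E)(ω_AE), (λ∘N ⊗ id_E)(ω_AE) ). -/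
set_option linter.unusedVariables false

noncomputable section

open scoped BigOperators ComplexOrder

/-! The channel `λ ∘ N` is itself resource-nongenerating, because `λ` turns every state, in
particular every output `(N ⊗ id_E)(ω)`, into a free state. Hence it competes in the minimum
defining `R_Ω(N)`, and its free-state distance to `N` is the right-hand side. -/

section TensorWithIdentity

variable {a b c e : ℕ}

@[simp]
lemma matSlice_apply (i j : Fin a) (X : Matrix (Fin a × Fin e) (Fin a × Fin e) ℂ) (k l : Fin e) :
    matSlice i j X k l = X (i, k) (j, l) :=
  rfl

lemma mmap_apply_eq_sum_single (f : MMap a b) (A : Mat a) (i j : Fin b) :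
    f A i j = ∑ r : Fin a × Fin a, A r.1 r.2 * f (Matrix.single r.1 r.2 1) i j := by
  conv_lhs => rw [Matrix.matrix_eq_sum_single A]
  rw [map_sum, Matrix.sum_apply, Fintype.sum_prod_type]
  refine Finset.sum_congr rfl fun p _ => ?_
  rw [map_sum, Matrix.sum_apply]
  refine Finset.sum_congr rfl fun q _ => ?_
  rw [show Matrix.single p q (A p q) = A p q • Matrix.single p q 1 by
    rw [Matrix.smul_single, smul_eq_mul, mul_one], map_smul, Matrix.smul_apply, smul_eq_mul]

lemma tensorAux_comp_id (f : MMap b c) (g : MMap a b) :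
    tensorAux (f ∘ₗ g) (idMap e) = tensorAux f (idMap e) ∘ₗ tensorAux g (idMap e) := by
  refine LinearMap.ext fun X => ?_
  ext q q'
  simp only [tensorAux, matSlice_apply, LinearMap.coe_mk, AddHom.coe_mk, LinearMap.comp_apply,
    Matrix.of_apply, idMap, LinearMap.id_coe, id_eq, Finset.mul_sum]
  conv_rhs => rw [Finset.sum_comm]
  refine Finset.sum_congr rfl fun p _ => ?_
  rw [mmap_apply_eq_sum_single f (g (Matrix.single p.1 p.2 1)), Finset.sum_mul]
  exact Finset.sum_congr rfl fun r _ => by ring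

lemma tensorMap_comp_id (f : MMap b c) (g : MMap a b) :
    tensorMap (f ∘ₗ g) (idMap e) = tensorMap f (idMap e) ∘ₗ tensorMap g (idMap e) := by
  refine LinearMap.ext fun X => ?_
  simp only [tensorMap, LinearMap.comp_apply, LinearEquiv.coe_coe,
    Matrix.coe_reindexLinearEquiv, tensorAux_comp_id, Matrix.reindex_apply,
    Equiv.symm_symm, Matrix.submatrix_submatrix, Equiv.symm_comp_self,
    Matrix.submatrix_id_id]

lemma trace_reindex {m n R : Type*} [Fintype m] [Fintype n] [AddCommMonoid R] (σ : m ≃ n)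
    (A : Matrix m m R) : (Matrix.reindex σ σ A).trace = A.trace := by
  unfold Matrix.trace
  simp only [Matrix.diag, Matrix.reindex_apply, Matrix.submatrix_apply]
  exact σ.symm.sum_comp fun i => A i i

lemma trace_tensorAux_id {N : MMap a b} (hN : IsTP N)
    (Y : Matrix (Fin a × Fin e) (Fin a × Fin e) ℂ) :
    (tensorAux N (idMap e) Y).trace = Y.trace := by
  have trace_image_single (i j : Fin a) :
      (N (Matrix.single i j 1)).trace = if i = j then 1 else 0 := by
    rw [hN]
    split_ifs with hij
    · rw [hij, Matrix.trace_single_eq_same]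
    · exact Matrix.trace_single_eq_of_ne _ _ _ hij
  calc (tensorAux N (idMap e) Y).trace
      = ∑ p : Fin a × Fin a,
          (N (Matrix.single p.1 p.2 1)).trace * ∑ k : Fin e, Y (p.1, k) (p.2, k) := by
        unfold Matrix.trace
        -- split only the output index `(i, k)`; the input pair `p` must stay one summation
        simp only [Matrix.diag, tensorAux, matSlice_apply, LinearMap.coe_mk,
          AddHom.coe_mk, Matrix.of_apply, idMap, LinearMap.id_coe, id_eq, Finset.sum_mul,
          Finset.mul_sum, Fintype.sum_prod_type (f := fun q : Fin b × Fin e => _)]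
        exact (Finset.sum_congr rfl fun _ _ => Finset.sum_comm).trans <|
          Finset.sum_comm.trans <| Finset.sum_congr rfl fun _ _ => Finset.sum_comm
    _ = Y.trace := by
        simp only [trace_image_single, ite_mul, one_mul, zero_mul, Fintype.sum_prod_type,
          Finset.sum_ite_eq, Finset.mem_univ, if_true]
        rw [Matrix.trace, Fintype.sum_prod_type]
        rfl

lemma IsTP.tensorMap_id {N : MMap a b} (hN : IsTP N) : IsTP (tensorMap N (idMap e)) := by
  intro X
  simp only [tensorMap, LinearMap.comp_apply, LinearEquiv.coe_coe,
    Matrix.coe_reindexLinearEquiv, trace_reindex, trace_tensorAux_id hN]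

lemma IsChannel.isState_tensorMap_id {N : MMap a b} (hN : IsChannel N) {ρ : Mat (a * e)}
    (hρ : IsState ρ) : IsState (tensorMap N (idMap e) ρ) :=
  ⟨hN.1.2 e ρ hρ.1, by rw [hN.2.tensorMap_id, hρ.2]⟩

lemma IsChannel.comp {M : MMap b c} {N : MMap a b} (hM : IsChannel M) (hN : IsChannel N) :
    IsChannel (M ∘ₗ N) := by
  refine ⟨⟨fun X hX => hM.1.1 _ (hN.1.1 X hX), fun e X hX => ?_⟩, fun X => ?_⟩
  · rw [tensorMap_comp_id]
    exact hM.1.2 e _ (hN.1.2 e X hX)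
  · rw [LinearMap.comp_apply, hM.2, hN.2]

end TensorWithIdentity

section ResourceTheory

variable {D : DQ} {Ω : FreeStates} {a b : ℕ}

def IsResourceDestroying (Ω : FreeStates) {a b : ℕ} (lam : MMap a b) : Prop :=
  ∀ (e : ℕ) (ρ : Mat (a * e)), IsState ρ → tensorMap lam (idMap e) ρ ∈ Ω (b * e)

lemma IsResourceDestroying.rng_comp (hΩ : IsFreeStates Ω) {lam : MMap b b}
    (hlam : IsResourceDestroying Ω lam) {N : MMap a b} (hN : IsChannel N) :
    RNG Ω (lam ∘ₗ N) := by
  intro e ω hω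
  rw [tensorMap_comp_id]
  exact hlam e _ (hN.isState_tensorMap_id (hΩ.isState _ ω hω))

lemma chanDistFree_nonneg (hD : IsDistanceQuantifier D) (hΩ : IsFreeStates Ω)
    {N M : MMap a b} (hN : IsChannel N) (hM : IsChannel M) : 0 ≤ chanDistFree D Ω N M := by
  apply Real.sSup_nonneg
  rintro x ⟨e, ω, hω, rfl⟩
  have hω := hΩ.isState _ ω hω
  exact hD.nonneg _ _ _ (hN.isState_tensorMap_id hω) (hM.isState_tensorMap_id hω)

lemma ROmega_le_chanDistFree (hD : IsDistanceQuantifier D) (hΩ : IsFreeStates Ω)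
    {N M : MMap a b} (hN : IsChannel N) (hM : IsChannel M) (hMΩ : RNG Ω M) :
    ROmega D Ω N ≤ chanDistFree D Ω N M := by
  refine csInf_le ⟨0, ?_⟩ ⟨M, hM, hMΩ, rfl⟩
  rintro x ⟨M', hM', -, rfl⟩
  exact chanDistFree_nonneg hD hΩ hN hM'

end ResourceTheory

/-- If `λ` is a resource destroying channel on system `A`, then for every
quantum channel `N` on `A`,
`R_Ω(N) ≤ max_{ω free} D((N ⊗ id)(ω), ((λ ∘ N) ⊗ id)(ω))`. -/
theorem ROmega_le_resourceDestroying
    (D : DQ) (hD : IsDistanceQuantifier D) (Ω : FreeStates) (hΩ : IsFreeStates Ω)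
    (a : ℕ) (lam : MMap a a) (hlam : IsChannel lam)
    (hRD : ∀ (e : ℕ) (ρ : Mat (a * e)), IsState ρ → tensorMap lam (idMap e) ρ ∈ Ω (a * e)) :
    ∀ N : MMap a a, IsChannel N →
      ROmega D Ω N ≤ sSup {x : ℝ | ∃ (e : ℕ) (ω : Mat (a * e)), ω ∈ Ω (a * e) ∧
        x = D (a * e) (tensorMap N (idMap e) ω) (tensorMap (lam ∘ₗ N) (idMap e) ω)} :=
  fun N hN => ROmega_le_chanDistFree hD hΩ hN (hlam.comp hN)
    (IsResourceDestroying.rng_comp (lam := lam) hΩ hRD hN)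

end
end
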